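/- arXiv:2009.05990 — 7 statements merged into one kernel-verified Lean document; each statement's English description precedes it below -/
import Mathlib

section
/- Let ν be a probability distribution on a finite set X and let X_1,...,X_N be i.i.d. samples from ν. Then the expected missing mass, E[∑_{x ∈ X} ν(x)·1(x not among X_1,...,X_N)] = ∑_{x ∈ X} ν(x)(1-ν(x))^N, is at most 4|X|/(9N). -/
open Finset
open scoped Classical

lemma key_ineq {p : ℝ} {N : ℕ} (hN : 1 ≤ N) (h0 : 0 ≤ p) (h1 : p ≤ 1) :
    p * (1 - p) ^ N ≤ 4 / (9 * N) := by
  have hNpos : (0:ℝ) < N := by exact_mod_cast hN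
  have h1p : (1 - p) ≤ Real.exp (-p) := by
    have := Real.add_one_le_exp (-p); linarith
  have hpow : (1 - p) ^ N ≤ Real.exp (-(p * N)) := by
    calc (1 - p) ^ N ≤ (Real.exp (-p)) ^ N :=
          pow_le_pow_left₀ (by linarith) h1p N
      _ = Real.exp (-(p * N)) := by
          rw [← Real.exp_nat_mul]; ring_nf
  have ht : p * N * Real.exp (-(p * N)) ≤ Real.exp (-1) := by
    set t := p * N with htdef
    have : t ≤ Real.exp (t - 1) := by
      have := Real.add_one_le_exp (t - 1); linarith
    calc t * Real.exp (-t) ≤ Real.exp (t - 1) * Real.exp (-t) :=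
          mul_le_mul_of_nonneg_right this (Real.exp_nonneg _)
      _ = Real.exp (-1) := by rw [← Real.exp_add]; ring_nf
  have hexp : Real.exp (-1) ≤ 4 / 9 := by
    rw [Real.exp_neg]
    have h : (9:ℝ)/4 ≤ Real.exp 1 := by
      have := Real.exp_one_gt_d9; norm_num at this ⊢; linarith
    rw [inv_le_comm₀ (Real.exp_pos 1) (by norm_num)]
    linarith [h]
  have kk : p * (1 - p) ^ N ≤ p * Real.exp (-(p * N)) :=
    mul_le_mul_of_nonneg_left hpow h0
  have : p * Real.exp (-(p * N)) = (p * N * Real.exp (-(p * N))) / N := by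
    field_simp
  rw [this] at kk
  calc p * (1 - p) ^ N ≤ (p * N * Real.exp (-(p * N))) / N := kk
    _ ≤ Real.exp (-1) / N := by gcongr
    _ ≤ 4 / (9 * N) := by
        rw [div_le_div_iff₀ hNpos (by positivity)]
        nlinarith [hexp]

/-- Expected missing mass: for a probability distribution `ν` on a finite set `X` and
`N` i.i.d. samples from `ν`, the expected missing mass
`E[∑_x ν(x) 1(x unobserved)]` equals `∑_x ν(x)(1-ν(x))^N` and is at most `4|X|/(9N)`. -/
theorem stmt2 {X : Type*} [Fintype X] {N : ℕ} (hN : 1 ≤ N)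
    (ν : X → ℝ) (hν0 : ∀ x, 0 ≤ ν x) (hν1 : ∑ x, ν x = 1) :
    (∑ xs : Fin N → X, (∏ i, ν (xs i)) *
        ∑ x : X, ν x * (if ∀ i, xs i ≠ x then 1 else 0))
      = ∑ x : X, ν x * (1 - ν x) ^ N ∧
    ∑ x : X, ν x * (1 - ν x) ^ N ≤ 4 * (Fintype.card X) / (9 * N) := by
  have hle1 : ∀ x, ν x ≤ 1 := by
    intro x
    calc ν x ≤ ∑ y, ν y := Finset.single_le_sum (fun y _ => hν0 y) (mem_univ x)
      _ = 1 := hν1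
  constructor
  · simp_rw [Finset.mul_sum]
    rw [Finset.sum_comm]
    refine Finset.sum_congr rfl fun x _ => ?_
    have hind : ∀ xs : Fin N → X, (if ∀ i, xs i ≠ x then (1:ℝ) else 0)
        = ∏ i, if xs i ≠ x then (1:ℝ) else 0 := by
      intro xs
      rw [Finset.prod_boole]
      simp
    have step : ∀ xs : Fin N → X, (∏ i, ν (xs i)) * (ν x * (if ∀ i, xs i ≠ x then (1:ℝ) else 0))
        = ν x * ∏ i, (ν (xs i) * if xs i ≠ x then (1:ℝ) else 0) := by
      intro xs
      rw [hind xs, Finset.prod_mul_distrib]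
      ring
    simp_rw [step]
    rw [← Finset.mul_sum, ← Fintype.sum_pow (fun y => ν y * if y ≠ x then (1:ℝ) else 0) N]
    congr 1
    have : ∑ y : X, (ν y * if y ≠ x then (1:ℝ) else 0) = (∑ y, ν y) - ν x := by
      have h2 : ∀ y : X, ν y * (if y ≠ x then (1:ℝ) else 0)
          = ν y - (if y = x then ν y else 0) := by
        intro y; by_cases h : y = x <;> simp [h]
      simp_rw [h2, Finset.sum_sub_distrib, Finset.sum_ite_eq' Finset.univ x ν]
      simp
    rw [this, hν1]
  · have hNpos : (0:ℝ) < N := by exact_mod_cast hN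
    calc ∑ x : X, ν x * (1 - ν x) ^ N
        ≤ ∑ _x : X, 4 / (9 * (N:ℝ)) :=
          Finset.sum_le_sum fun x _ => key_ineq hN (hν0 x) (hle1 x)
      _ = (Fintype.card X : ℝ) * (4 / (9 * N)) := by
          rw [Finset.sum_const, card_univ, nsmul_eq_mul]
      _ = 4 * (Fintype.card X) / (9 * N) := by ring
end

section
/- Let ν be a probability distribution on a finite set X of size S, with ν assigning mass 1/(N+1) to each of S-1 elements and the remaining mass to one element. If X_1,...,X_N are i.i.d. samples from ν, then the expected missing mass E[∑_{x} ν(x)(1-ν(x))^N] is at least (S-1)/(e(N+1)). -/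
open Finset

lemma key (N : ℕ) (hN : 1 ≤ N) :
    (Real.exp 1)⁻¹ ≤ (1 - 1 / ((N : ℝ) + 1)) ^ N := by
  have hNpos : (0:ℝ) < N := by exact_mod_cast hN
  have hN0 : (N:ℝ) ≠ 0 := ne_of_gt hNpos
  have h1 : (1 - 1 / ((N : ℝ) + 1)) = ((1 + 1/(N:ℝ))⁻¹) := by
    field_simp
    ring
  have h2 : (1 + 1/(N:ℝ)) ^ N ≤ Real.exp 1 := by
    have := Real.add_one_le_exp (1/(N:ℝ))
    calc (1 + 1/(N:ℝ)) ^ N ≤ (Real.exp (1/(N:ℝ))) ^ N := by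
          apply pow_le_pow_left₀ (by positivity) (by linarith)
      _ = Real.exp 1 := by
          rw [← Real.exp_nat_mul]
          congr 1
          field_simp
  rw [h1, inv_pow]
  exact inv_anti₀ (by positivity) h2

/-- Lower bound on the expected missing mass of the distribution on `Fin S` putting
mass `1/(N+1)` on `S-1` designated elements and the remaining mass on the last one:
`∑_x ν(x)(1-ν(x))^N ≥ (S-1)/(e(N+1))`. -/
theorem stmt3 (S N : ℕ) (hS : 2 ≤ S) (hN : 1 ≤ N)
    (hmass : ((S : ℝ) - 1) / (N + 1) ≤ 1)
    (ν : Fin S → ℝ)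
    (hν : ∀ i : Fin S, ν i =
      if (i : ℕ) < S - 1 then 1 / ((N : ℝ) + 1) else 1 - ((S : ℝ) - 1) / (N + 1)) :
    ((S : ℝ) - 1) / (Real.exp 1 * (N + 1)) ≤ ∑ i : Fin S, ν i * (1 - ν i) ^ N := by
  have hepos := Real.exp_pos 1
  have hN1 : (0:ℝ) < (N:ℝ) + 1 := by positivity
  have hSm1 : (0:ℝ) ≤ (S:ℝ) - 1 := by
    have : (2:ℝ) ≤ S := by exact_mod_cast hS
    linarith
  set c : ℝ := 1 / (Real.exp 1 * ((N:ℝ) + 1)) with hc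
  have hterm : ∀ i : Fin S, (if (i:ℕ) < S - 1 then c else 0) ≤ ν i * (1 - ν i) ^ N := by
    intro i
    rw [hν i]
    by_cases h : (i:ℕ) < S - 1
    · simp only [h, if_true]
      have hk := key N hN
      rw [hc]
      calc 1 / (Real.exp 1 * ((N:ℝ)+1)) = (1/((N:ℝ)+1)) * (Real.exp 1)⁻¹ := by
            have he0 : Real.exp 1 ≠ 0 := ne_of_gt hepos
            have hn0 : ((N:ℝ)+1) ≠ 0 := ne_of_gt hN1
            field_simp
        _ ≤ (1/((N:ℝ)+1)) * (1 - 1/((N:ℝ)+1)) ^ N :=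
            mul_le_mul_of_nonneg_left hk (by positivity)
    · simp only [h, if_false]
      have h1 : 0 ≤ 1 - ((S:ℝ) - 1)/((N:ℝ)+1) := by
        linarith [hmass]
      have h2 : 0 ≤ (1 - (1 - ((S:ℝ) - 1)/((N:ℝ)+1))) ^ N := by
        have : (0:ℝ) ≤ ((S:ℝ)-1)/((N:ℝ)+1) := by positivity
        have heq : 1 - (1 - ((S:ℝ) - 1)/((N:ℝ)+1)) = ((S:ℝ)-1)/((N:ℝ)+1) := by ring
        rw [heq]; positivity
      positivity
  calc ((S : ℝ) - 1) / (Real.exp 1 * (N + 1))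
      = ∑ i : Fin S, (if (i:ℕ) < S - 1 then c else 0) := by
        rw [Finset.sum_ite, Finset.sum_const, Finset.sum_const_zero, add_zero]
        have hlt : S - 1 < S := by omega
        have hfe : (Finset.univ.filter fun i : Fin S => (i:ℕ) < S - 1)
            = Finset.Iio (⟨S-1, hlt⟩ : Fin S) := by
          ext i; simp [Fin.lt_def]
        rw [hfe, Fin.card_Iio]
        rw [nsmul_eq_mul, hc]
        have hScast : ((S - 1 : ℕ) : ℝ) = (S:ℝ) - 1 := by
          have : (1:ℕ) ≤ S := by omega
          push_cast [this]; ring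
        rw [hScast]
        field_simp
    _ ≤ _ := Finset.sum_le_sum (fun i _ => hterm i)
end

section
/- For any ε ∈ [0,1] and integer H ≥ 1, the sum ∑_{t=1}^{H} (H - t + 1)·ε·(1-ε)^{t-1} satisfies ∑_{t=1}^{H} (H-t+1)·ε·(1-ε)^{t-1} ≤ min{H, H²ε}. -/
open Finset

/-- Error compounding upper bound: for `ε ∈ [0,1]` and `H ≥ 1`,
`∑_{t=1}^H (H - t + 1) ε (1-ε)^{t-1} ≤ min {H, H² ε}`. -/
theorem stmt4 (ε : ℝ) (hε0 : 0 ≤ ε) (hε1 : ε ≤ 1) (H : ℕ) (hH : 1 ≤ H) :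
    ∑ t ∈ Finset.Icc 1 H, ((H : ℝ) - t + 1) * ε * (1 - ε) ^ (t - 1)
      ≤ min (H : ℝ) ((H : ℝ) ^ 2 * ε) := by
  have h01 : 0 ≤ 1 - ε := by linarith
  have h11 : 1 - ε ≤ 1 := by linarith
  rw [le_min_iff]
  constructor
  · calc ∑ t ∈ Finset.Icc 1 H, ((H : ℝ) - t + 1) * ε * (1 - ε) ^ (t - 1)
        ≤ ∑ t ∈ Finset.Icc 1 H, (H : ℝ) * (ε * (1 - ε) ^ (t - 1)) := by
          apply Finset.sum_le_sum
          intro t ht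
          simp only [Finset.mem_Icc] at ht
          have h1 : (t : ℝ) ≥ 1 := by exact_mod_cast ht.1
          have hp : (0:ℝ) ≤ (1 - ε) ^ (t - 1) := pow_nonneg h01 _
          have : ((H : ℝ) - t + 1) ≤ (H : ℝ) := by linarith
          rw [mul_assoc]
          exact mul_le_mul_of_nonneg_right this (mul_nonneg hε0 hp)
      _ = (H : ℝ) * ∑ t ∈ Finset.Icc 1 H, ε * (1 - ε) ^ (t - 1) := by
          rw [Finset.mul_sum]
      _ ≤ (H : ℝ) * 1 := by
          apply mul_le_mul_of_nonneg_left _ (by positivity)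
          have : ∑ t ∈ Finset.Icc 1 H, ε * (1 - ε) ^ (t - 1)
              = ∑ i ∈ Finset.range H, ε * (1 - ε) ^ i := by
            rw [show Finset.Icc 1 H = Finset.Ico 1 (H+1) by rw [Finset.Ico_add_one_right_eq_Icc],
              Finset.sum_Ico_eq_sum_range]
            simp
          rw [this]
          have := geom_sum_mul (1 - ε) H
          have key : ∑ i ∈ Finset.range H, ε * (1 - ε) ^ i = 1 - (1 - ε) ^ H := by
            have := geom_sum_mul (1 - ε) H
            calc ∑ i ∈ Finset.range H, ε * (1 - ε) ^ i
                = (∑ i ∈ Finset.range H, (1 - ε) ^ i) * ε := by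
                  rw [Finset.sum_mul]; congr 1; ext i; ring
            _ = 1 - (1 - ε) ^ H := by nlinarith [geom_sum_mul (1 - ε) H]
          rw [key]
          have : 0 ≤ (1 - ε) ^ H := pow_nonneg h01 _
          linarith
      _ = (H : ℝ) := mul_one _
  · calc ∑ t ∈ Finset.Icc 1 H, ((H : ℝ) - t + 1) * ε * (1 - ε) ^ (t - 1)
        ≤ ∑ t ∈ Finset.Icc 1 H, (H : ℝ) * ε := by
          apply Finset.sum_le_sum
          intro t ht
          simp only [Finset.mem_Icc] at ht
          have h1 : (t : ℝ) ≥ 1 := by exact_mod_cast ht.1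
          have hp : (1 - ε) ^ (t - 1) ≤ 1 := pow_le_one₀ h01 h11
          have hp0 : (0:ℝ) ≤ (1 - ε) ^ (t - 1) := pow_nonneg h01 _
          have hc : ((H : ℝ) - t + 1) ≤ (H : ℝ) := by linarith
          have hc0 : 0 ≤ (H : ℝ) - t + 1 := by
            have : (t : ℝ) ≤ H := by exact_mod_cast ht.2
            linarith
          calc ((H : ℝ) - t + 1) * ε * (1 - ε) ^ (t - 1)
              ≤ ((H : ℝ) - t + 1) * ε * 1 :=
                mul_le_mul_of_nonneg_left hp (mul_nonneg hc0 hε0)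
            _ = ((H : ℝ) - t + 1) * ε := mul_one _
            _ ≤ (H : ℝ) * ε := mul_le_mul_of_nonneg_right hc hε0
      _ = (H : ℝ) * ((H : ℝ) * ε) := by
          rw [Finset.sum_const, Nat.card_Icc]
          simp [nsmul_eq_mul]
      _ = (H : ℝ) ^ 2 * ε := by ring
end

section
/- Reduction of imitation learning to supervised learning under TV distance: in an episodic MDP with rewards in [0,1] and horizon H, if the learner policy π̂ satisfies T_pop(π̂, π*) := (1/H)∑_{t=1}^H E_{s ~ f^t_{π*}}[TV(π̂_t(·|s), π*_t(·|s))] ≤ ε, where f^t_{π*} is the state distribution at time t under the expert policy π*, then J(π*) - J(π̂) ≤ min{H, H²ε}. -/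
open Finset
open scoped Classical

/-- Probability of a length-`H` trajectory `tr` (a function `Fin H → S × A`) under
initial distribution `ρ`, transitions `P`, and (possibly stochastic, nonstationary)
policy `π`. -/
noncomputable def trajProb {S A : Type*} {H : ℕ}
    (ρ : S → ℝ) (P : Fin H → S → A → S → ℝ) (π : Fin H → S → A → ℝ)
    (tr : Fin H → S × A) : ℝ :=
  (if h : 0 < H then ρ (tr ⟨0, h⟩).1 else 1) *
    ∏ t : Fin H, (π t (tr t).1 (tr t).2 *
      if h : (t : ℕ) + 1 < H then P t (tr t).1 (tr t).2 (tr ⟨(t : ℕ) + 1, h⟩).1 else 1)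

/-- Value `J(π) = E_π [∑_t r_t(s_t, a_t)]` of a policy. -/
noncomputable def value {S A : Type*} [Fintype S] [Fintype A] {H : ℕ}
    (ρ : S → ℝ) (P : Fin H → S → A → S → ℝ) (r : Fin H → S → A → ℝ)
    (π : Fin H → S → A → ℝ) : ℝ :=
  ∑ tr : Fin H → S × A, trajProb ρ P π tr * ∑ t : Fin H, r t (tr t).1 (tr t).2

/-- Marginal probability of being at state `s` at time `t` when rolling out `π`. -/
noncomputable def stateProb {S A : Type*} [Fintype S] [Fintype A] {H : ℕ}
    (ρ : S → ℝ) (P : Fin H → S → A → S → ℝ) (π : Fin H → S → A → ℝ)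
    (t : Fin H) (s : S) : ℝ :=
  ∑ tr : Fin H → S × A, if (tr t).1 = s then trajProb ρ P π tr else 0

/-- Total variation distance between two distributions on a finite action set. -/
noncomputable def tvDist {A : Type*} [Fintype A] (p q : A → ℝ) : ℝ :=
  (∑ a : A, |p a - q a|) / 2

/-- The deterministic policy induced by an action map. -/
noncomputable def detPol {S A : Type*} {H : ℕ} (πs : Fin H → S → A) :
    Fin H → S → A → ℝ :=
  fun t s a => if a = πs t s then 1 else 0

/-- Probability of a dataset of `N` i.i.d. trajectories. -/
noncomputable def dataProb {S A : Type*} {H N : ℕ}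
    (ρ : S → ℝ) (P : Fin H → S → A → S → ℝ) (π : Fin H → S → A → ℝ)
    (D : Fin N → Fin H → S × A) : ℝ :=
  ∏ i, trajProb ρ P π (D i)

lemma trajProb_split {S A : Type*} {n : ℕ} (ρ : S → ℝ)
    (P : Fin (n+1) → S → A → S → ℝ) (π : Fin (n+1) → S → A → ℝ) (tr : Fin (n+1) → S × A) :
    trajProb ρ P π tr = ρ (tr 0).1 * ((∏ t : Fin (n+1), π t (tr t).1 (tr t).2) *
      ∏ t : Fin n, P t.castSucc (tr t.castSucc).1 (tr t.castSucc).2 (tr t.succ).1) := by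
  unfold trajProb
  rw [dif_pos (Nat.succ_pos n), Finset.prod_mul_distrib]
  congr 2
  rw [Fin.prod_univ_castSucc, dif_neg (by simp), mul_one]
  apply Finset.prod_congr rfl
  intro t _
  rw [dif_pos (by simp [t.2] : (t.castSucc : ℕ) + 1 < n + 1)]
  rfl

lemma trajProb_snoc {S A : Type*} {n : ℕ} (ρ : S → ℝ)
    (P : Fin (n+2) → S → A → S → ℝ) (π : Fin (n+2) → S → A → ℝ)
    (tr : Fin (n+1) → S × A) (x : S × A) :
    trajProb ρ P π (Fin.snoc tr x) =
      trajProb ρ (fun t => P t.castSucc) (fun t => π t.castSucc) tr *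
        (P (Fin.last n).castSucc (tr (Fin.last n)).1 (tr (Fin.last n)).2 x.1 *
          π (Fin.last (n+1)) x.1 x.2) := by
  rw [trajProb_split, trajProb_split]
  simp only [Fin.prod_univ_castSucc, Fin.snoc_castSucc, Fin.snoc_last, Fin.succ_castSucc, Fin.succ_last,
    show (0 : Fin (n+2)) = Fin.castSucc 0 from rfl]
  ring

lemma sum_snoc {X : Type*} [Fintype X] (n : ℕ) (F : (Fin (n+1) → X) → ℝ) :
    ∑ tr : Fin (n+1) → X, F tr = ∑ tr : Fin n → X, ∑ x : X, F (Fin.snoc tr x) := by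
  rw [← Equiv.sum_comp (Fin.snocEquiv (fun _ => X)) F, Fintype.sum_prod_type]
  rw [Finset.sum_comm]
  rfl

lemma sum_trajProb_fin_one {S A : Type*} [Fintype S] [Fintype A] (ρ : S → ℝ)
    (P : Fin 1 → S → A → S → ℝ) (π : Fin 1 → S → A → ℝ) :
    ∑ tr : Fin 1 → S × A, trajProb ρ P π tr = ∑ x : S × A, ρ x.1 * π 0 x.1 x.2 := by
  rw [← Equiv.sum_comp (Equiv.funUnique (Fin 1) (S × A)).symm]
  apply Finset.sum_congr rfl
  intro x _
  simp [trajProb, Equiv.funUnique]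

lemma sum_trajProb_peel {S A : Type*} [Fintype S] [Fintype A] {n : ℕ} (ρ : S → ℝ)
    (P : Fin (n+2) → S → A → S → ℝ) (π : Fin (n+2) → S → A → ℝ)
    (hP1 : ∀ t s a, ∑ s', P t s a s' = 1)
    (hlast : ∀ s, ∑ a, π (Fin.last (n+1)) s a = 1) :
    ∑ tr : Fin (n+2) → S × A, trajProb ρ P π tr
      = ∑ tr : Fin (n+1) → S × A,
          trajProb ρ (fun t => P t.castSucc) (fun t => π t.castSucc) tr := by
  rw [sum_snoc]
  refine Finset.sum_congr rfl fun tr _ => ?_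
  simp only [trajProb_snoc]
  rw [← Finset.mul_sum]
  have h1 : (∑ x : S × A, P (Fin.last n).castSucc (tr (Fin.last n)).1 (tr (Fin.last n)).2 x.1
      * π (Fin.last (n+1)) x.1 x.2) = 1 := by
    rw [Fintype.sum_prod_type]
    simp_rw [← Finset.mul_sum, hlast, mul_one]
    exact hP1 _ _ _
  rw [h1, mul_one]

lemma sum_trajProb_trunc {S A : Type*} [Fintype S] [Fintype A] {n m : ℕ} (hm : 1 ≤ m)
    (h : m ≤ n) (ρ : S → ℝ) (P : Fin n → S → A → S → ℝ) (π : Fin n → S → A → ℝ)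
    (hP1 : ∀ t s a, ∑ s', P t s a s' = 1)
    (hnorm : ∀ t : Fin n, m ≤ (t : ℕ) → ∀ s, ∑ a, π t s a = 1) :
    ∑ tr : Fin n → S × A, trajProb ρ P π tr
      = ∑ tr : Fin m → S × A,
          trajProb ρ (fun t => P (Fin.castLE h t)) (fun t => π (Fin.castLE h t)) tr := by
  induction n with
  | zero => omega
  | succ n ih =>
    rcases eq_or_lt_of_le h with heq | hlt
    · subst heq
      rfl
    · have h' : m ≤ n := by omega
      obtain ⟨n', rfl⟩ : ∃ n', n = n' + 1 := ⟨n - 1, by omega⟩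
      rw [sum_trajProb_peel ρ P π hP1 (hnorm (Fin.last (n'+1)) (by simp; omega))]
      rw [ih h' (fun t => P t.castSucc) (fun t => π t.castSucc)
        (fun t s a => hP1 t.castSucc s a)
        (fun t ht s => hnorm t.castSucc (by simpa using ht) s)]
      rfl

lemma sum_trajProb_last_row {S A : Type*} [Fintype S] [Fintype A] {m : ℕ} (ρ : S → ℝ)
    (P : Fin (m+1) → S → A → S → ℝ) (σ τ : Fin (m+1) → S → A → ℝ)
    (hagree : ∀ t : Fin (m+1), t ≠ Fin.last m → σ t = τ t)
    (hrow : ∀ s, ∑ a, σ (Fin.last m) s a = ∑ a, τ (Fin.last m) s a) :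
    ∑ tr : Fin (m+1) → S × A, trajProb ρ P σ tr
      = ∑ tr : Fin (m+1) → S × A, trajProb ρ P τ tr := by
  cases m with
  | zero =>
    rw [sum_trajProb_fin_one, sum_trajProb_fin_one, Fintype.sum_prod_type,
      Fintype.sum_prod_type]
    refine Finset.sum_congr rfl fun s _ => ?_
    dsimp only
    rw [← Finset.mul_sum, ← Finset.mul_sum]
    have h0 : (0 : Fin 1) = Fin.last 0 := rfl
    rw [h0, hrow s]
  | succ m =>
    rw [sum_snoc]
    conv_rhs => rw [sum_snoc]
    refine Finset.sum_congr rfl fun tr _ => ?_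
    simp only [trajProb_snoc]
    have htr : (fun t : Fin (m+1) => σ t.castSucc) = fun t => τ t.castSucc :=
      funext fun t => hagree t.castSucc (Fin.castSucc_lt_last t).ne
    rw [← Finset.mul_sum, ← Finset.mul_sum, htr]
    congr 1
    rw [Fintype.sum_prod_type, Fintype.sum_prod_type]
    refine Finset.sum_congr rfl fun s _ => ?_
    dsimp only
    rw [← Finset.mul_sum, ← Finset.mul_sum, hrow s]

lemma trajProb_nonneg {S A : Type*} {n : ℕ} (ρ : S → ℝ) (hρ0 : ∀ s, 0 ≤ ρ s)
    (P : Fin n → S → A → S → ℝ) (hP0 : ∀ t s a s', 0 ≤ P t s a s')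
    (π : Fin n → S → A → ℝ) (hπ0 : ∀ t s a, 0 ≤ π t s a) (tr : Fin n → S × A) :
    0 ≤ trajProb ρ P π tr := by
  unfold trajProb
  apply mul_nonneg
  · split
    · exact hρ0 _
    · exact zero_le_one
  · exact Finset.prod_nonneg fun t _ => mul_nonneg (hπ0 _ _ _)
      (by split
          · exact hP0 _ _ _ _
          · exact zero_le_one)

lemma prod_replace {n : ℕ} (f g : Fin n → ℝ) (k : Fin n) (c : ℝ)
    (hne : ∀ t, t ≠ k → f t = g t) (hk : f k = c * g k) :
    ∏ t, f t = c * ∏ t, g t := by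
  rw [← Finset.mul_prod_erase Finset.univ f (Finset.mem_univ k),
      ← Finset.mul_prod_erase Finset.univ g (Finset.mem_univ k), hk,
      Finset.prod_congr rfl (fun t ht => hne t (Finset.mem_erase.1 ht).1)]
  ring

lemma trajProb_replace {S A : Type*} {n : ℕ} (ρ : S → ℝ) (P : Fin n → S → A → S → ℝ)
    (π π' : Fin n → S → A → ℝ) (k : Fin n) (hne : ∀ t, t ≠ k → π' t = π t)
    (tr : Fin n → S × A) (c : ℝ)
    (hc : π' k (tr k).1 (tr k).2 = c * π k (tr k).1 (tr k).2) :
    trajProb ρ P π' tr = c * trajProb ρ P π tr := by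
  unfold trajProb
  rw [prod_replace
    (fun t => π' t (tr t).1 (tr t).2 *
      if h : (t : ℕ) + 1 < n then P t (tr t).1 (tr t).2 (tr ⟨(t : ℕ) + 1, h⟩).1 else 1)
    (fun t => π t (tr t).1 (tr t).2 *
      if h : (t : ℕ) + 1 < n then P t (tr t).1 (tr t).2 (tr ⟨(t : ℕ) + 1, h⟩).1 else 1)
    k c (fun t ht => by rw [hne t ht]) (by rw [hc]; ring)]
  ring

lemma group_at {X : Type*} [Fintype X] [DecidableEq X] {n : ℕ} (k : Fin n) (F : X → ℝ)
    (G : (Fin n → X) → ℝ) :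
    ∑ tr : Fin n → X, F (tr k) * G tr
      = ∑ x : X, F x * ∑ tr : Fin n → X, (if tr k = x then G tr else 0) := by
  simp_rw [Finset.mul_sum, mul_ite, mul_zero]
  rw [Finset.sum_comm]
  refine Finset.sum_congr rfl fun tr _ => ?_
  simp

noncomputable def hybPol {S A : Type*} {H : ℕ} (πa πb : Fin H → S → A → ℝ) (k : ℕ) :
    Fin H → S → A → ℝ :=
  fun t => if (t : ℕ) < k then πa t else πb t

noncomputable def oneAt {S A : Type*} {H : ℕ} (base : Fin H → S → A → ℝ) (k : Fin H) :
    Fin H → S → A → ℝ :=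
  fun t => if t = k then (fun _ _ => 1) else base t

lemma sum_pair {S A : Type*} [Fintype S] [Fintype A] (f : S → ℝ) (g : S → A → ℝ) :
    ∑ x : S × A, f x.1 * g x.1 x.2 = ∑ s, f s * ∑ a, g s a := by
  rw [Fintype.sum_prod_type]
  exact Finset.sum_congr rfl fun s _ => by dsimp only; rw [← Finset.mul_sum]

lemma center_bound {A : Type*} [Fintype A] (p q W : A → ℝ) (hpq : ∑ a, (p a - q a) = 0)
    (B : ℝ) (hW0 : ∀ a, 0 ≤ W a) (hWle : ∀ a, W a ≤ B) :
    ∑ a, (p a - q a) * W a ≤ B * ((∑ a, |q a - p a|) / 2) := by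
  rcases isEmpty_or_nonempty A with hA | hA
  · simp
  have hB : 0 ≤ B := le_trans (hW0 (Classical.arbitrary A)) (hWle (Classical.arbitrary A))
  have key : ∑ a, (p a - q a) * W a = ∑ a, (p a - q a) * (W a - B / 2) := by
    rw [← sub_eq_zero, ← Finset.sum_sub_distrib]
    rw [Finset.sum_congr rfl (fun a _ => show (p a - q a) * W a - (p a - q a) * (W a - B / 2)
      = (p a - q a) * (B / 2) from by ring), ← Finset.sum_mul, hpq, zero_mul]
  rw [key]
  calc ∑ a, (p a - q a) * (W a - B / 2) ≤ ∑ a, |q a - p a| * (B / 2) := by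
        refine Finset.sum_le_sum fun a _ => ?_
        refine le_trans (le_abs_self _) ?_
        rw [abs_mul, abs_sub_comm]
        exact mul_le_mul_of_nonneg_left
          (abs_le.mpr ⟨by linarith [hW0 a], by linarith [hWle a]⟩) (abs_nonneg _)
    _ = B * ((∑ a, |q a - p a|) / 2) := by rw [← Finset.sum_mul]; ring

lemma key_step {S A : Type*} [Fintype S] [Fintype A] {H : ℕ}
    (ρ : S → ℝ) (hρ0 : ∀ s, 0 ≤ ρ s)
    (P : Fin H → S → A → S → ℝ) (hP0 : ∀ t s a s', 0 ≤ P t s a s')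
    (hP1 : ∀ t s a, ∑ s', P t s a s' = 1)
    (r : Fin H → S → A → ℝ) (hr0 : ∀ t s a, 0 ≤ r t s a) (hr1 : ∀ t s a, r t s a ≤ 1)
    (πstar πhat : Fin H → S → A → ℝ)
    (hπs0 : ∀ t s a, 0 ≤ πstar t s a) (hπs1 : ∀ t s, ∑ a, πstar t s a = 1)
    (hπh0 : ∀ t s a, 0 ≤ πhat t s a) (hπh1 : ∀ t s, ∑ a, πhat t s a = 1)
    (k : Fin H) :
    value ρ P r (hybPol πstar πhat ((k : ℕ) + 1)) - value ρ P r (hybPol πstar πhat (k : ℕ))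
      ≤ (H : ℝ) * ∑ s : S, stateProb ρ P πstar k s * tvDist (πhat k s) (πstar k s) := by
  classical
  unfold stateProb
  set one1 : Fin H → S → A → ℝ := oneAt (hybPol πstar πhat (k : ℕ)) k with hone1
  have hone_ne : ∀ t : Fin H, t ≠ k → one1 t = hybPol πstar πhat (k : ℕ) t :=
    fun t ht => if_neg ht
  have hone_self : one1 k = fun _ _ => (1 : ℝ) := if_pos rfl
  have hone0 : ∀ t s a, 0 ≤ one1 t s a := by
    intro t s a
    by_cases h : t = k
    · rw [h, hone_self]
      exact zero_le_one
    · rw [hone_ne t h]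
      unfold hybPol
      split
      · exact hπs0 _ _ _
      · exact hπh0 _ _ _
  have hsame : ∀ t : Fin H, t ≠ k → hybPol πstar πhat ((k : ℕ) + 1) t
      = hybPol πstar πhat (k : ℕ) t := by
    intro t ht
    have hv : (t : ℕ) ≠ (k : ℕ) := fun h => ht (Fin.ext h)
    unfold hybPol
    exact if_congr (by omega) rfl rfl
  have e1 : ∀ tr : Fin H → S × A, trajProb ρ P (hybPol πstar πhat ((k : ℕ) + 1)) tr
      = πstar k (tr k).1 (tr k).2 * trajProb ρ P one1 tr := by
    intro tr
    refine trajProb_replace ρ P one1 _ k (fun t ht => by rw [hsame t ht, hone_ne t ht]) tr _ ?_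
    rw [hone_self]
    show hybPol πstar πhat ((k : ℕ) + 1) k (tr k).1 (tr k).2 = _
    unfold hybPol
    rw [if_pos (by omega)]
    ring
  have e2 : ∀ tr : Fin H → S × A, trajProb ρ P (hybPol πstar πhat (k : ℕ)) tr
      = πhat k (tr k).1 (tr k).2 * trajProb ρ P one1 tr := by
    intro tr
    refine trajProb_replace ρ P one1 _ k (fun t ht => (hone_ne t ht).symm) tr _ ?_
    rw [hone_self]
    show hybPol πstar πhat (k : ℕ) k (tr k).1 (tr k).2 = _
    unfold hybPol
    rw [if_neg (by omega)]
    ring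
  have hR0 : ∀ tr : Fin H → S × A, 0 ≤ ∑ t : Fin H, r t (tr t).1 (tr t).2 :=
    fun tr => Finset.sum_nonneg fun t _ => hr0 _ _ _
  have hRH : ∀ tr : Fin H → S × A, (∑ t : Fin H, r t (tr t).1 (tr t).2) ≤ (H : ℝ) := by
    intro tr
    calc (∑ t : Fin H, r t (tr t).1 (tr t).2) ≤ ∑ _t : Fin H, (1 : ℝ) :=
          Finset.sum_le_sum fun t _ => hr1 _ _ _
      _ = (H : ℝ) := by simp
  set W : S × A → ℝ := fun x => ∑ tr : Fin H → S × A,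
      (if tr k = x then trajProb ρ P one1 tr * ∑ t : Fin H, r t (tr t).1 (tr t).2 else 0)
    with hWdef
  set Mx : S × A → ℝ := fun x => ∑ tr : Fin H → S × A,
      (if tr k = x then trajProb ρ P one1 tr else 0) with hMdef
  have hW0 : ∀ x, 0 ≤ W x := by
    intro x
    refine Finset.sum_nonneg fun tr _ => ?_
    split
    · exact mul_nonneg (trajProb_nonneg ρ hρ0 P hP0 one1 hone0 tr) (hR0 tr)
    · exact le_rfl
  have hM : ∀ x : S × A, Mx x = ∑ tr : Fin H → S × A,
      (if (tr k).1 = x.1 then trajProb ρ P πstar tr else 0) := by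
    rintro ⟨s, a⟩
    set σ : Fin H → S → A → ℝ := fun t => if t = k
        then (fun s' a' => if s' = s ∧ a' = a then (1 : ℝ) else 0)
        else hybPol πstar πhat (k : ℕ) t with hσ
    set τ : Fin H → S → A → ℝ := fun t => if t = k
        then (fun s' a' => if s' = s then πstar k s' a' else 0)
        else πstar t with hτ
    have hσself : σ k = fun s' a' => if s' = s ∧ a' = a then (1 : ℝ) else 0 := if_pos rfl
    have hσne : ∀ t, t ≠ k → σ t = hybPol πstar πhat (k : ℕ) t := fun t ht => if_neg ht
    have hτself : τ k = fun s' a' => if s' = s then πstar k s' a' else 0 := if_pos rfl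
    have hτne : ∀ t, t ≠ k → τ t = πstar t := fun t ht => if_neg ht
    have step1 : Mx (s, a) = ∑ tr : Fin H → S × A, trajProb ρ P σ tr := by
      rw [hMdef]
      refine Finset.sum_congr rfl fun tr _ => ?_
      have h := trajProb_replace ρ P one1 σ k
        (fun t ht => by rw [hσne t ht, hone_ne t ht]) tr
        (if (tr k).1 = s ∧ (tr k).2 = a then 1 else 0)
        (by rw [hσself, hone_self]; dsimp only; rw [mul_one])
      rw [h]
      by_cases htr : tr k = (s, a)
      · rw [if_pos htr, if_pos (by rw [Prod.ext_iff] at htr; exact htr), one_mul]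
      · rw [if_neg htr, if_neg (fun hc => htr (Prod.ext hc.1 hc.2)), zero_mul]
    have step2 : (∑ tr : Fin H → S × A, if (tr k).1 = s then trajProb ρ P πstar tr else 0)
        = ∑ tr : Fin H → S × A, trajProb ρ P τ tr := by
      refine Finset.sum_congr rfl fun tr _ => ?_
      have h := trajProb_replace ρ P πstar τ k hτne tr (if (tr k).1 = s then 1 else 0)
        (by
          rw [hτself]
          dsimp only
          by_cases hs : (tr k).1 = s
          · rw [if_pos hs, if_pos hs, one_mul]
          · rw [if_neg hs, if_neg hs, zero_mul])
      rw [h]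
      by_cases hs : (tr k).1 = s
      · rw [if_pos hs, if_pos hs, one_mul]
      · rw [if_neg hs, if_neg hs, zero_mul]
    have hk1 : (k : ℕ) + 1 ≤ H := k.2
    have hσn : ∀ t : Fin H, (k : ℕ) + 1 ≤ (t : ℕ) → ∀ s', ∑ a', σ t s' a' = 1 := by
      intro t ht s'
      have hne : t ≠ k := by intro h; rw [h] at ht; omega
      rw [hσne t hne]
      unfold hybPol
      rw [if_neg (by omega)]
      exact hπh1 t s'
    have hτn : ∀ t : Fin H, (k : ℕ) + 1 ≤ (t : ℕ) → ∀ s', ∑ a', τ t s' a' = 1 := by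
      intro t ht s'
      have hne : t ≠ k := by intro h; rw [h] at ht; omega
      rw [hτne t hne]
      exact hπs1 t s'
    have step3 : (∑ tr : Fin H → S × A, trajProb ρ P σ tr)
        = ∑ tr : Fin H → S × A, trajProb ρ P τ tr := by
      rw [sum_trajProb_trunc (Nat.le_add_left 1 (k : ℕ)) hk1 ρ P σ hP1 hσn,
          sum_trajProb_trunc (Nat.le_add_left 1 (k : ℕ)) hk1 ρ P τ hP1 hτn]
      refine sum_trajProb_last_row ρ _ _ _ ?_ ?_
      · intro t ht
        have h2 : (t : ℕ) ≠ (k : ℕ) := by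
          intro h
          exact ht (Fin.ext (by simpa using h))
        have htk : (t : ℕ) < (k : ℕ) := by
          have h1 : (t : ℕ) < (k : ℕ) + 1 := t.2
          omega
        have hne : Fin.castLE hk1 t ≠ k := by
          intro h
          have := congrArg Fin.val h
          simp at this
          omega
        show σ (Fin.castLE hk1 t) = τ (Fin.castLE hk1 t)
        rw [hσne _ hne, hτne _ hne]
        unfold hybPol
        rw [if_pos (by simpa using htk)]
      · intro s'
        have hlk : Fin.castLE hk1 (Fin.last (k : ℕ)) = k := Fin.ext (by simp)
        show ∑ a', σ (Fin.castLE hk1 (Fin.last (k : ℕ))) s' a'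
          = ∑ a', τ (Fin.castLE hk1 (Fin.last (k : ℕ))) s' a'
        rw [hlk, hσself, hτself]
        dsimp only
        by_cases hs : s' = s
        · subst hs
          simp [hπs1]
        · simp [hs]
    rw [step1, step3, ← step2]
  have hWM : ∀ x : S × A, W x ≤ (H : ℝ) * ∑ tr : Fin H → S × A,
      (if (tr k).1 = x.1 then trajProb ρ P πstar tr else 0) := by
    intro x
    have h1 : W x ≤ Mx x * (H : ℝ) := by
      rw [hWdef, hMdef]
      dsimp only
      rw [Finset.sum_mul]
      refine Finset.sum_le_sum fun tr _ => ?_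
      by_cases htr : tr k = x
      · rw [if_pos htr, if_pos htr]
        exact mul_le_mul_of_nonneg_left (hRH tr) (trajProb_nonneg ρ hρ0 P hP0 one1 hone0 tr)
      · rw [if_neg htr, if_neg htr, zero_mul]
    calc W x ≤ Mx x * (H : ℝ) := h1
      _ = (H : ℝ) * ∑ tr : Fin H → S × A,
            (if (tr k).1 = x.1 then trajProb ρ P πstar tr else 0) := by rw [hM x]; ring
  calc value ρ P r (hybPol πstar πhat ((k : ℕ) + 1)) - value ρ P r (hybPol πstar πhat (k : ℕ))
      = ∑ tr : Fin H → S × A, (πstar k (tr k).1 (tr k).2 - πhat k (tr k).1 (tr k).2)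
          * (trajProb ρ P one1 tr * ∑ t : Fin H, r t (tr t).1 (tr t).2) := by
        unfold value
        rw [← Finset.sum_sub_distrib]
        exact Finset.sum_congr rfl fun tr _ => by rw [e1 tr, e2 tr]; ring
    _ = ∑ x : S × A, (πstar k x.1 x.2 - πhat k x.1 x.2) * W x := by
        rw [hWdef]
        dsimp only
        exact group_at k (fun x => πstar k x.1 x.2 - πhat k x.1 x.2)
          (fun tr => trajProb ρ P one1 tr * ∑ t : Fin H, r t (tr t).1 (tr t).2)
    _ = ∑ s : S, ∑ a : A, (πstar k s a - πhat k s a) * W (s, a) := by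
        rw [Fintype.sum_prod_type]
    _ ≤ ∑ s : S, ((H : ℝ) * ∑ tr : Fin H → S × A,
          (if (tr k).1 = s then trajProb ρ P πstar tr else 0))
          * tvDist (πhat k s) (πstar k s) := by
        refine Finset.sum_le_sum fun s _ => ?_
        have hpq : ∑ a, (πstar k s a - πhat k s a) = 0 := by
          rw [Finset.sum_sub_distrib, hπs1, hπh1]
          ring
        exact center_bound (fun a => πstar k s a) (fun a => πhat k s a) (fun a => W (s, a))
          hpq ((H : ℝ) * ∑ tr : Fin H → S × A,
            (if (tr k).1 = s then trajProb ρ P πstar tr else 0))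
          (fun a => hW0 (s, a)) (fun a => hWM (s, a))
    _ = (H : ℝ) * ∑ s : S, (∑ tr : Fin H → S × A,
          (if (tr k).1 = s then trajProb ρ P πstar tr else 0))
          * tvDist (πhat k s) (πstar k s) := by
        rw [Finset.mul_sum]
        exact Finset.sum_congr rfl fun s _ => by ring

lemma sum_trajProb_one {S A : Type*} [Fintype S] [Fintype A] {H : ℕ} (hH : 1 ≤ H)
    (ρ : S → ℝ) (hρ1 : ∑ s, ρ s = 1)
    (P : Fin H → S → A → S → ℝ) (hP1 : ∀ t s a, ∑ s', P t s a s' = 1)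
    (π : Fin H → S → A → ℝ) (hπ1 : ∀ t s, ∑ a, π t s a = 1) :
    ∑ tr : Fin H → S × A, trajProb ρ P π tr = 1 := by
  rw [sum_trajProb_trunc (le_refl 1) hH ρ P π hP1 (fun t _ s => hπ1 t s),
    sum_trajProb_fin_one, _root_.sum_pair]
  simp_rw [hπ1, mul_one]
  exact hρ1


/-- Reduction of imitation learning to supervised learning under TV distance:
in an episodic MDP with rewards in `[0,1]` and horizon `H`, if the population TV risk
`T_pop(π̂, π*) = (1/H) ∑_t E_{s ~ f^t_{π*}} [TV(π̂_t(·|s), π*_t(·|s))]` is at most `ε`,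
then `J(π*) - J(π̂) ≤ min {H, H² ε}`. -/
theorem stmt7 {S A : Type*} [Fintype S] [Fintype A] {H : ℕ} (hH : 1 ≤ H)
    (ρ : S → ℝ) (hρ0 : ∀ s, 0 ≤ ρ s) (hρ1 : ∑ s, ρ s = 1)
    (P : Fin H → S → A → S → ℝ) (hP0 : ∀ t s a s', 0 ≤ P t s a s')
    (hP1 : ∀ t s a, ∑ s', P t s a s' = 1)
    (r : Fin H → S → A → ℝ) (hr0 : ∀ t s a, 0 ≤ r t s a) (hr1 : ∀ t s a, r t s a ≤ 1)
    (πstar πhat : Fin H → S → A → ℝ)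
    (hπs0 : ∀ t s a, 0 ≤ πstar t s a) (hπs1 : ∀ t s, ∑ a, πstar t s a = 1)
    (hπh0 : ∀ t s a, 0 ≤ πhat t s a) (hπh1 : ∀ t s, ∑ a, πhat t s a = 1)
    (ε : ℝ)
    (hTV : (1 / (H : ℝ)) * ∑ t : Fin H, ∑ s : S,
        stateProb ρ P πstar t s * tvDist (πhat t s) (πstar t s) ≤ ε) :
    value ρ P r πstar - value ρ P r πhat ≤ min (H : ℝ) ((H : ℝ) ^ 2 * ε) := by
  classical
  have hHpos : (0 : ℝ) < (H : ℝ) := by exact_mod_cast Nat.lt_of_lt_of_le Nat.zero_lt_one hH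
  -- rewards bounds per trajectory
  have hR0 : ∀ tr : Fin H → S × A, 0 ≤ ∑ t : Fin H, r t (tr t).1 (tr t).2 :=
    fun tr => Finset.sum_nonneg fun t _ => hr0 _ _ _
  have hRH : ∀ tr : Fin H → S × A, (∑ t : Fin H, r t (tr t).1 (tr t).2) ≤ (H : ℝ) := by
    intro tr
    calc (∑ t : Fin H, r t (tr t).1 (tr t).2) ≤ ∑ _t : Fin H, (1 : ℝ) :=
        Finset.sum_le_sum fun t _ => hr1 _ _ _
      _ = (H : ℝ) := by simp
  -- part 1 : trivial bound by H
  have h1 : value ρ P r πstar ≤ (H : ℝ) := by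
    unfold value
    calc (∑ tr : Fin H → S × A, trajProb ρ P πstar tr * ∑ t : Fin H, r t (tr t).1 (tr t).2)
        ≤ ∑ tr : Fin H → S × A, trajProb ρ P πstar tr * (H : ℝ) :=
          Finset.sum_le_sum fun tr _ => mul_le_mul_of_nonneg_left (hRH tr)
            (trajProb_nonneg ρ hρ0 P hP0 πstar hπs0 tr)
      _ = (H : ℝ) := by
          rw [← Finset.sum_mul, sum_trajProb_one hH ρ hρ1 P hP1 πstar hπs1, one_mul]
  have h2 : 0 ≤ value ρ P r πhat :=
    Finset.sum_nonneg fun tr _ =>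
      mul_nonneg (trajProb_nonneg ρ hρ0 P hP0 πhat hπh0 tr) (hR0 tr)
  -- part 2 : telescoping
  have hybH : hybPol πstar πhat H = πstar := funext fun t => if_pos t.2
  have hyb0 : hybPol πstar πhat 0 = πhat := funext fun t => if_neg (Nat.not_lt_zero _)
  have tele : value ρ P r πstar - value ρ P r πhat
      = ∑ i ∈ Finset.range H,
          (value ρ P r (hybPol πstar πhat (i + 1)) - value ρ P r (hybPol πstar πhat i)) := by
    rw [Finset.sum_range_sub (fun i => value ρ P r (hybPol πstar πhat i)) H, hybH, hyb0]
  set g : ℕ → ℝ := fun i => if h : i < H then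
      ∑ s : S, stateProb ρ P πstar ⟨i, h⟩ s
        * tvDist (πhat ⟨i, h⟩ s) (πstar ⟨i, h⟩ s) else 0 with hg
  have bound2 : value ρ P r πstar - value ρ P r πhat ≤ (H : ℝ) ^ 2 * ε := by
    have step : value ρ P r πstar - value ρ P r πhat
        ≤ ∑ i ∈ Finset.range H, (H : ℝ) * g i := by
      rw [tele]
      refine Finset.sum_le_sum fun i hi => ?_
      have hiH : i < H := Finset.mem_range.1 hi
      have := key_step ρ hρ0 P hP0 hP1 r hr0 hr1 πstar πhat hπs0 hπs1 hπh0 hπh1 ⟨i, hiH⟩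
      rw [hg]
      dsimp only
      rw [dif_pos hiH]
      exact this
    have hsumg : ∑ i ∈ Finset.range H, g i
        = ∑ t : Fin H, ∑ s : S,
            stateProb ρ P πstar t s * tvDist (πhat t s) (πstar t s) := by
      rw [← Fin.sum_univ_eq_sum_range g H]
      refine Finset.sum_congr rfl fun t _ => ?_
      rw [hg]
      dsimp only
      rw [dif_pos t.2]
    have hTV' : (∑ t : Fin H, ∑ s : S,
        stateProb ρ P πstar t s * tvDist (πhat t s) (πstar t s)) ≤ (H : ℝ) * ε := by
      have h := mul_le_mul_of_nonneg_left hTV (le_of_lt hHpos)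
      rw [← mul_assoc, mul_one_div, div_self hHpos.ne', one_mul] at h
      exact h
    calc value ρ P r πstar - value ρ P r πhat ≤ ∑ i ∈ Finset.range H, (H : ℝ) * g i := step
      _ = (H : ℝ) * ∑ i ∈ Finset.range H, g i := by rw [Finset.mul_sum]
      _ = (H : ℝ) * ∑ t : Fin H, ∑ s : S,
            stateProb ρ P πstar t s * tvDist (πhat t s) (πstar t s) := by rw [hsumg]
      _ ≤ (H : ℝ) * ((H : ℝ) * ε) := mul_le_mul_of_nonneg_left hTV' (le_of_lt hHpos)
      _ = (H : ℝ) ^ 2 * ε := by ring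
  exact le_min (by linarith) bound2
end

section
/- In an episodic MDP where the expert policy π* is deterministic, any policy π̂ that agrees with π* at every state-time pair (t,s) visited in the expert dataset D has population 0-1 risk upper bounded by I_pop(π̂,π*) ≤ (1/H)∑_{t=1}^H ∑_{s∈S} Pr_{π*}[s_t = s]·1(s ∉ S_t(D)), where S_t(D) is the set of states visited at time t in some trajectory of D. -/
open Finset
open scoped Classical

/-- If the expert policy `π*` is deterministic, any policy `π̂` agreeing with `π*` at
every state-time pair visited in the expert dataset `D` has population 0-1 risk bounded
by the expert-state-distribution mass of states unvisited in `D`: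
`I_pop(π̂, π*) ≤ (1/H) ∑_t ∑_s Pr_{π*}[s_t = s] · 1(s ∉ S_t(D))`. -/
theorem stmt9 {S A : Type*} [Fintype S] [Fintype A] {H N : ℕ}
    (ρ : S → ℝ) (hρ0 : ∀ s, 0 ≤ ρ s) (hρ1 : ∑ s, ρ s = 1)
    (P : Fin H → S → A → S → ℝ) (hP0 : ∀ t s a s', 0 ≤ P t s a s')
    (hP1 : ∀ t s a, ∑ s', P t s a s' = 1)
    (πstar : Fin H → S → A)
    (πhat : Fin H → S → A → ℝ)
    (hπh0 : ∀ t s a, 0 ≤ πhat t s a) (hπh1 : ∀ t s, ∑ a, πhat t s a = 1)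
    (D : Fin N → Fin H → S × A)
    (hmimic : ∀ t s, (∃ i, (D i t).1 = s) →
      ∀ a, πhat t s a = if a = πstar t s then 1 else 0) :
    (1 / (H : ℝ)) * ∑ t : Fin H, ∑ s : S, stateProb ρ P (detPol πstar) t s *
        ∑ a : A, πhat t s a * (if a = πstar t s then (0 : ℝ) else 1)
      ≤ (1 / (H : ℝ)) * ∑ t : Fin H, ∑ s : S, stateProb ρ P (detPol πstar) t s *
        (if ∃ i, (D i t).1 = s then (0 : ℝ) else 1) := by
  have hsp : ∀ t s, 0 ≤ stateProb ρ P (detPol πstar) t s := by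
    intro t s
    apply Finset.sum_nonneg
    intro tr _
    split_ifs with h
    · unfold trajProb
      apply mul_nonneg
      · split_ifs; exacts [hρ0 _, zero_le_one]
      · apply Finset.prod_nonneg
        intro u _
        apply mul_nonneg
        · unfold detPol; split_ifs; exacts [zero_le_one, le_refl 0]
        · split_ifs; exacts [hP0 _ _ _ _, zero_le_one]
    · exact le_refl 0
  apply mul_le_mul_of_nonneg_left _ (by positivity)
  apply Finset.sum_le_sum; intro t _
  apply Finset.sum_le_sum; intro s _
  apply mul_le_mul_of_nonneg_left _ (hsp t s)
  split_ifs with h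
  · have : ∀ a, πhat t s a * (if a = πstar t s then (0:ℝ) else 1) = 0 := by
      intro a
      rw [hmimic t s h a]
      split_ifs <;> simp
    simp [this]
  · calc ∑ a : A, πhat t s a * (if a = πstar t s then (0:ℝ) else 1)
        ≤ ∑ a : A, πhat t s a := by
          apply Finset.sum_le_sum; intro a _
          have := hπh0 t s a
          split_ifs <;> simp [this]
      _ = 1 := hπh1 t s
end

section
/- In an episodic MDP with rewards bounded in [0,1] and deterministic expert, for any policy π̂ that exactly mimics the expert at all state-time pairs visited in the dataset D_1, J(π*) - J(π̂) ≤ ∑_{t=1}^H ∑_{s,a} |Pr_{π*}[E^{≤t}, s_t=s, a_t=a] - Pr_{π̂}[E^{≤t}, s_t=s, a_t=a]|, where E^{≤t} is the event that at some time τ ≤ t the trajectory visits a state not visited at time τ in any trajectory of D_1. -/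
open Finset
open scoped Classical

section MyAux

variable {S A : Type*} {H : ℕ}

/-- Truncated trajectory weight: only steps before `k` contribute. -/
noncomputable def myW (k : ℕ) (ρ : S → ℝ) (P : Fin H → S → A → S → ℝ)
    (π : Fin H → S → A → ℝ) (tr : Fin H → S × A) : ℝ :=
  (if h : 0 < H then ρ (tr ⟨0, h⟩).1 else 1) *
    ∏ τ : Fin H, if (τ : ℕ) < k then
      π τ (tr τ).1 (tr τ).2 *
        (if (τ : ℕ) + 1 < k then
          (if h : (τ : ℕ) + 1 < H then P τ (tr τ).1 (tr τ).2 (tr ⟨(τ : ℕ) + 1, h⟩).1 else 1)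
        else 1)
    else 1

/-- A function depending only on coordinates `< k`. -/
def myDepLT (k : ℕ) (g : (Fin H → S × A) → ℝ) : Prop :=
  ∀ tr tr' : Fin H → S × A, (∀ τ : Fin H, (τ : ℕ) < k → tr τ = tr' τ) → g tr = g tr'

lemma myDepLT.mono {k k' : ℕ} (h : k ≤ k') {g : (Fin H → S × A) → ℝ}
    (hg : myDepLT k g) : myDepLT k' g :=
  fun tr tr' ha => hg tr tr' (fun τ hτ => ha τ (hτ.trans_le h))

lemma myW_top (ρ : S → ℝ) (P : Fin H → S → A → S → ℝ) (π : Fin H → S → A → ℝ)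
    (tr : Fin H → S × A) : myW H ρ P π tr = trajProb ρ P π tr := by
  unfold myW trajProb
  congr 1
  apply Finset.prod_congr rfl
  intro τ _
  rw [if_pos τ.isLt]
  congr 1
  by_cases h : (τ : ℕ) + 1 < H
  · rw [if_pos h]
  · rw [if_neg h, dif_neg h]

lemma myW_dep {k : ℕ} (hk : 1 ≤ k) (ρ : S → ℝ) (P : Fin H → S → A → S → ℝ)
    (π : Fin H → S → A → ℝ) : myDepLT k (myW k ρ P π) := by
  intro tr tr' ha
  unfold myW
  congr 1
  · split_ifs with h
    · rw [ha ⟨0, h⟩ hk]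
    · rfl
  · apply Finset.prod_congr rfl
    intro τ _
    by_cases hτ : (τ : ℕ) < k
    · rw [if_pos hτ, if_pos hτ, ha τ hτ]
      congr 1
      by_cases h2 : (τ : ℕ) + 1 < k
      · rw [if_pos h2, if_pos h2]
        split_ifs with h3
        · rw [ha ⟨(τ : ℕ) + 1, h3⟩ h2]
        · rfl
      · rw [if_neg h2, if_neg h2]
    · rw [if_neg hτ, if_neg hτ]

lemma myW_pol {k : ℕ} (ρ : S → ℝ) (P : Fin H → S → A → S → ℝ)
    {π1 π2 : Fin H → S → A → ℝ} (ha : ∀ τ : Fin H, (τ : ℕ) < k → π1 τ = π2 τ)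
    (tr : Fin H → S × A) : myW k ρ P π1 tr = myW k ρ P π2 tr := by
  unfold myW
  congr 1
  apply Finset.prod_congr rfl
  intro τ _
  by_cases hτ : (τ : ℕ) < k
  · rw [if_pos hτ, if_pos hτ, ha τ hτ]
  · rw [if_neg hτ, if_neg hτ]

lemma myW_succ {m : ℕ} (hkH : m + 1 < H) (ρ : S → ℝ) (P : Fin H → S → A → S → ℝ)
    (π : Fin H → S → A → ℝ) (tr : Fin H → S × A) :
    myW (m + 2) ρ P π tr =
      myW (m + 1) ρ P π tr *
        (π ⟨m + 1, hkH⟩ (tr ⟨m + 1, hkH⟩).1 (tr ⟨m + 1, hkH⟩).2 *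
          P ⟨m, Nat.lt_of_succ_lt hkH⟩ (tr ⟨m, Nat.lt_of_succ_lt hkH⟩).1
            (tr ⟨m, Nat.lt_of_succ_lt hkH⟩).2 (tr ⟨m + 1, hkH⟩).1) := by
  have hm : m < H := Nat.lt_of_succ_lt hkH
  have hne : (⟨m + 1, hkH⟩ : Fin H) ≠ ⟨m, hm⟩ := by simp [Fin.ext_iff]
  unfold myW
  have key : (∏ τ : Fin H, if (τ : ℕ) < m + 2 then
        π τ (tr τ).1 (tr τ).2 *
          (if (τ : ℕ) + 1 < m + 2 then
            (if h : (τ : ℕ) + 1 < H then P τ (tr τ).1 (tr τ).2 (tr ⟨(τ : ℕ) + 1, h⟩).1 else 1)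
          else 1)
      else 1)
      = ∏ τ : Fin H, ((if (τ : ℕ) < m + 1 then
          π τ (tr τ).1 (tr τ).2 *
            (if (τ : ℕ) + 1 < m + 1 then
              (if h : (τ : ℕ) + 1 < H then P τ (tr τ).1 (tr τ).2 (tr ⟨(τ : ℕ) + 1, h⟩).1 else 1)
            else 1)
        else 1) *
        ((if τ = ⟨m + 1, hkH⟩ then π ⟨m + 1, hkH⟩ (tr ⟨m + 1, hkH⟩).1 (tr ⟨m + 1, hkH⟩).2 else 1) *
         (if τ = ⟨m, hm⟩ then
            P ⟨m, hm⟩ (tr ⟨m, hm⟩).1 (tr ⟨m, hm⟩).2 (tr ⟨m + 1, hkH⟩).1 else 1))) := by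
    apply Finset.prod_congr rfl
    intro τ _
    have hv1 : ((⟨m + 1, hkH⟩ : Fin H) : ℕ) = m + 1 := rfl
    have hv2 : ((⟨m, hm⟩ : Fin H) : ℕ) = m := rfl
    by_cases h1 : τ = ⟨m + 1, hkH⟩
    · subst h1
      rw [if_neg hne, if_pos rfl]
      simp only [hv1]
      rw [if_pos (by omega : m + 1 < m + 2), if_neg (by omega : ¬ (m + 1 + 1 < m + 2)),
        if_neg (by omega : ¬ (m + 1 < m + 1))]
      ring
    · by_cases h2 : τ = ⟨m, hm⟩
      · subst h2
        rw [if_neg h1, if_pos rfl]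
        simp only [hv2]
        rw [if_pos (by omega : m < m + 2), if_pos (by omega : m + 1 < m + 2),
          if_pos (by omega : m < m + 1), if_neg (by omega : ¬ (m + 1 < m + 1)),
          dif_pos hkH]
        ring
      · have hτ1 : (τ : ℕ) ≠ m + 1 := fun h => h1 (Fin.ext h)
        have hτ2 : (τ : ℕ) ≠ m := fun h => h2 (Fin.ext h)
        rw [if_neg h1, if_neg h2, mul_one, mul_one]
        by_cases h3 : (τ : ℕ) < m + 1
        · rw [if_pos h3, if_pos (by omega : (τ : ℕ) < m + 2)]
          have h4 : ((τ : ℕ) + 1 < m + 2) = ((τ : ℕ) + 1 < m + 1) := by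
            apply propext; omega
          simp only [h4]
        · rw [if_neg h3, if_neg (by omega : ¬ ((τ : ℕ) < m + 2))]
  rw [key, Finset.prod_mul_distrib, Finset.prod_mul_distrib]
  simp only [Finset.prod_ite_eq', Finset.mem_univ, if_pos]
  ring

lemma myW_split [Fintype S] [Fintype A] [Nonempty S] [Nonempty A]
    {m : ℕ} (hkH : m + 1 < H) (ρ : S → ℝ) (P : Fin H → S → A → S → ℝ)
    (hP1 : ∀ t s a, ∑ s', P t s a s' = 1)
    (π : Fin H → S → A → ℝ) (hπ1 : ∀ t s, ∑ a, π t s a = 1)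
    (g : (Fin H → S × A) → ℝ) (hg : myDepLT (m + 1) g) :
    (Fintype.card (S × A) : ℝ) * ∑ tr : Fin H → S × A, myW (m + 2) ρ P π tr * g tr
      = ∑ tr : Fin H → S × A, myW (m + 1) ρ P π tr * g tr := by
  classical
  have hm : m < H := Nat.lt_of_succ_lt hkH
  set kf : Fin H := ⟨m + 1, hkH⟩ with hkf
  set km : Fin H := ⟨m, hm⟩ with hkm
  have hkmne : km ≠ kf := by simp [hkf, hkm, Fin.ext_iff]
  obtain ⟨x₀⟩ : Nonempty (S × A) := inferInstance
  set e := Equiv.funSplitAt kf (S × A) with he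
  have hco1 : ∀ (x : S × A) (u : {j : Fin H // j ≠ kf} → S × A), e.symm (x, u) kf = x := by
    intro x u
    simp [he, Equiv.funSplitAt, Equiv.piSplitAt]
  have hco2 : ∀ (x : S × A) (u : {j : Fin H // j ≠ kf} → S × A) (j : Fin H) (hj : j ≠ kf),
      e.symm (x, u) j = u ⟨j, hj⟩ := by
    intro x u j hj
    simp [he, Equiv.funSplitAt, Equiv.piSplitAt, hj]
  have hagree : ∀ (x x' : S × A) u (τ : Fin H), (τ : ℕ) < m + 1 →
      e.symm (x, u) τ = e.symm (x', u) τ := by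
    intro x x' u τ hτ
    have hτne : τ ≠ kf := by
      intro h; rw [h] at hτ; simp [hkf] at hτ
    rw [hco2 _ _ _ hτne, hco2 _ _ _ hτne]
  set Φ : ({j : Fin H // j ≠ kf} → S × A) → ℝ :=
    fun u => myW (m + 1) ρ P π (e.symm (x₀, u)) * g (e.symm (x₀, u)) with hΦ
  have hWg : ∀ (x : S × A) u,
      myW (m + 1) ρ P π (e.symm (x, u)) * g (e.symm (x, u)) = Φ u := by
    intro x u
    rw [hΦ]
    rw [myW_dep (Nat.le_add_left 1 m) ρ P π _ _ (hagree x x₀ u),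
      hg _ _ (hagree x x₀ u)]
  have hsum : ∀ F : (Fin H → S × A) → ℝ,
      ∑ tr : Fin H → S × A, F tr
        = ∑ x : S × A, ∑ u : {j : Fin H // j ≠ kf} → S × A, F (e.symm (x, u)) := by
    intro F
    rw [← Equiv.sum_comp e.symm F, Fintype.sum_prod_type]
  have hone : ∀ s a, ∑ x : S × A, π kf x.1 x.2 * P km s a x.1 = 1 := by
    intro s a
    rw [Fintype.sum_prod_type]
    have : ∀ s' : S, ∑ a' : A, π kf s' a' * P km s a s' = P km s a s' := by
      intro s'
      rw [← Finset.sum_mul, hπ1, one_mul]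
    rw [Finset.sum_congr rfl (fun s' _ => this s'), hP1]
  calc (Fintype.card (S × A) : ℝ) * ∑ tr : Fin H → S × A, myW (m + 2) ρ P π tr * g tr
      = (Fintype.card (S × A) : ℝ) *
          ∑ x : S × A, ∑ u : {j : Fin H // j ≠ kf} → S × A,
            myW (m + 2) ρ P π (e.symm (x, u)) * g (e.symm (x, u)) := by rw [hsum]
    _ = (Fintype.card (S × A) : ℝ) *
          ∑ x : S × A, ∑ u : {j : Fin H // j ≠ kf} → S × A,
            Φ u * (π kf x.1 x.2 * P km (u ⟨km, hkmne⟩).1 (u ⟨km, hkmne⟩).2 x.1) := by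
        congr 1
        apply Finset.sum_congr rfl; intro x _
        apply Finset.sum_congr rfl; intro u _
        rw [myW_succ hkH, ← hkf, ← hkm, hco1, hco2 _ _ _ hkmne, ← hWg x u]
        ring
    _ = (Fintype.card (S × A) : ℝ) *
          ∑ u : {j : Fin H // j ≠ kf} → S × A, Φ u := by
        congr 1
        rw [Finset.sum_comm]
        apply Finset.sum_congr rfl; intro u _
        rw [← Finset.mul_sum, hone, mul_one]
    _ = ∑ x : S × A, ∑ u : {j : Fin H // j ≠ kf} → S × A, Φ u := by
        rw [Finset.sum_const, nsmul_eq_mul, Finset.card_univ]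
    _ = ∑ tr : Fin H → S × A, myW (m + 1) ρ P π tr * g tr := by
        rw [hsum]
        apply Finset.sum_congr rfl; intro x _
        apply Finset.sum_congr rfl; intro u _
        rw [hWg x u]

lemma myW_eq [Fintype S] [Fintype A] [Nonempty S] [Nonempty A]
    (ρ : S → ℝ) (P : Fin H → S → A → S → ℝ)
    (hP1 : ∀ t s a, ∑ s', P t s a s' = 1)
    (π1 π2 : Fin H → S → A → ℝ)
    (hπ11 : ∀ t s, ∑ a, π1 t s a = 1) (hπ21 : ∀ t s, ∑ a, π2 t s a = 1)
    (g : (Fin H → S × A) → ℝ) :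
    ∀ (j k : ℕ), 1 ≤ k → k + j ≤ H →
      (∀ τ : Fin H, (τ : ℕ) < k → π1 τ = π2 τ) → myDepLT k g →
      ∑ tr : Fin H → S × A, myW (k + j) ρ P π1 tr * g tr
        = ∑ tr : Fin H → S × A, myW (k + j) ρ P π2 tr * g tr := by
  intro j
  induction j with
  | zero =>
    intro k hk1 hkH hag hg
    apply Finset.sum_congr rfl
    intro tr _
    rw [Nat.add_zero, myW_pol ρ P hag tr]
  | succ j ih =>
    intro k hk1 hkH hag hg
    have hm : k + j = (k + j - 1) + 1 := by omega
    have hmH : (k + j - 1) + 1 < H := by omega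
    have hg' : myDepLT ((k + j - 1) + 1) g := hg.mono (by omega)
    have h1 := myW_split hmH ρ P hP1 π1 hπ11 g hg'
    have h2 := myW_split hmH ρ P hP1 π2 hπ21 g hg'
    have hcard : (Fintype.card (S × A) : ℝ) ≠ 0 := by
      exact_mod_cast Fintype.card_ne_zero
    have hkj : k + (j + 1) = (k + j - 1) + 2 := by omega
    rw [hkj]
    apply mul_left_cancel₀ hcard
    rw [h1, h2, ← hm]
    exact ih k hk1 (by omega) hag hg

lemma my_tail_eq [Fintype S] [Fintype A] [Nonempty S] [Nonempty A]
    (ρ : S → ℝ) (P : Fin H → S → A → S → ℝ)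
    (hP1 : ∀ t s a, ∑ s', P t s a s' = 1)
    (π1 π2 : Fin H → S → A → ℝ)
    (hπ11 : ∀ t s, ∑ a, π1 t s a = 1) (hπ21 : ∀ t s, ∑ a, π2 t s a = 1)
    {k : ℕ} (hk1 : 1 ≤ k) (hkH : k ≤ H)
    (hag : ∀ τ : Fin H, (τ : ℕ) < k → π1 τ = π2 τ)
    (g : (Fin H → S × A) → ℝ) (hg : myDepLT k g) :
    ∑ tr : Fin H → S × A, trajProb ρ P π1 tr * g tr
      = ∑ tr : Fin H → S × A, trajProb ρ P π2 tr * g tr := by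
  have h := myW_eq ρ P hP1 π1 π2 hπ11 hπ21 g (H - k) k hk1 (by omega) hag hg
  have hk : k + (H - k) = H := by omega
  rw [hk] at h
  calc ∑ tr : Fin H → S × A, trajProb ρ P π1 tr * g tr
      = ∑ tr : Fin H → S × A, myW H ρ P π1 tr * g tr := by
        exact Finset.sum_congr rfl (fun tr _ => by rw [myW_top])
    _ = ∑ tr : Fin H → S × A, myW H ρ P π2 tr * g tr := h
    _ = ∑ tr : Fin H → S × A, trajProb ρ P π2 tr * g tr := by
        exact Finset.sum_congr rfl (fun tr _ => by rw [myW_top])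

lemma my_per_t [Fintype S] [Fintype A] [Nonempty S] [Nonempty A] {M : ℕ}
    (ρ : S → ℝ)
    (P : Fin H → S → A → S → ℝ) (hP1 : ∀ t s a, ∑ s', P t s a s' = 1)
    (r : Fin H → S → A → ℝ) (hr0 : ∀ t s a, 0 ≤ r t s a) (hr1 : ∀ t s a, r t s a ≤ 1)
    (πstar : Fin H → S → A) (πhat : Fin H → S → A → ℝ)
    (hπh1 : ∀ t s, ∑ a, πhat t s a = 1)
    (D1 : Fin M → Fin H → S × A)
    (hmimic : ∀ t s, (∃ i, (D1 i t).1 = s) →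
      ∀ a, πhat t s a = if a = πstar t s then 1 else 0)
    (t : Fin H) :
    ∑ tr : Fin H → S × A,
        (trajProb ρ P (detPol πstar) tr - trajProb ρ P πhat tr) * r t (tr t).1 (tr t).2
      ≤ ∑ s : S, ∑ a : A,
        |(∑ tr : Fin H → S × A,
            if (∃ τ : Fin H, τ ≤ t ∧ ∀ i, (D1 i τ).1 ≠ (tr τ).1) ∧
                (tr t).1 = s ∧ (tr t).2 = a then
              trajProb ρ P (detPol πstar) tr else 0) -
         (∑ tr : Fin H → S × A,
            if (∃ τ : Fin H, τ ≤ t ∧ ∀ i, (D1 i τ).1 ≠ (tr τ).1) ∧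
                (tr t).1 = s ∧ (tr t).2 = a then
              trajProb ρ P πhat tr else 0)| := by
  classical
  have hdet1 : ∀ (τ : Fin H) (s : S), ∑ a, detPol πstar τ s a = 1 := by
    intro τ s; simp [detPol]
  set π'' : Fin H → S → A → ℝ :=
    fun τ s a => if (τ : ℕ) ≤ (t : ℕ) then πhat τ s a else detPol πstar τ s a with hπ''
  have hπ''1 : ∀ τ s, ∑ a, π'' τ s a = 1 := by
    intro τ s
    simp only [hπ'']
    split_ifs
    · exact hπh1 τ s
    · exact hdet1 τ s
  set g : (Fin H → S × A) → ℝ := fun tr =>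
    if (∃ τ : Fin H, τ ≤ t ∧ ∀ i, (D1 i τ).1 ≠ (tr τ).1) then 0
    else r t (tr t).1 (tr t).2 with hgdef
  have hlt : ∀ τ : Fin H, τ ≤ t → (τ : ℕ) < (t : ℕ) + 1 :=
    fun τ h => Nat.lt_succ_of_le (Fin.le_def.mp h)
  have hgdep : myDepLT ((t : ℕ) + 1) g := by
    intro tr tr' ha
    have hiff : (∃ τ : Fin H, τ ≤ t ∧ ∀ i, (D1 i τ).1 ≠ (tr τ).1) ↔
        (∃ τ : Fin H, τ ≤ t ∧ ∀ i, (D1 i τ).1 ≠ (tr' τ).1) := by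
      constructor
      · rintro ⟨τ, hτ, hall⟩
        exact ⟨τ, hτ, by rw [← ha τ (hlt τ hτ)]; exact hall⟩
      · rintro ⟨τ, hτ, hall⟩
        exact ⟨τ, hτ, by rw [ha τ (hlt τ hτ)]; exact hall⟩
    simp only [hgdef]
    rw [ha t (Nat.lt_succ_self _)]
    exact if_congr hiff rfl rfl
  have hB : ∑ tr : Fin H → S × A, trajProb ρ P (detPol πstar) tr * g tr
      = ∑ tr : Fin H → S × A, trajProb ρ P πhat tr * g tr := by
    have step1 : ∀ tr : Fin H → S × A,
        trajProb ρ P (detPol πstar) tr * g tr = trajProb ρ P π'' tr * g tr := by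
      intro tr
      by_cases hE : (∃ τ : Fin H, τ ≤ t ∧ ∀ i, (D1 i τ).1 ≠ (tr τ).1)
      · have hg0 : g tr = 0 := by simp only [hgdef]; exact if_pos hE
        rw [hg0, mul_zero, mul_zero]
      · push_neg at hE
        congr 1
        unfold trajProb
        congr 1
        apply Finset.prod_congr rfl
        intro τ _
        congr 1
        simp only [hπ'']
        split_ifs with hle
        · rw [hmimic τ (tr τ).1 (hE τ (Fin.le_def.mpr hle)) (tr τ).2]
          rfl
        · rfl
    rw [Finset.sum_congr rfl (fun tr _ => step1 tr)]
    exact my_tail_eq ρ P hP1 π'' πhat hπ''1 hπh1 (Nat.le_add_left 1 (t : ℕ))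
      t.isLt
      (fun τ hτ => by
        funext s a
        simp only [hπ'']
        rw [if_pos (Nat.lt_succ_iff.mp hτ)])
      g hgdep
  have hsplit : ∑ tr : Fin H → S × A,
      (trajProb ρ P (detPol πstar) tr - trajProb ρ P πhat tr) * r t (tr t).1 (tr t).2
      = (∑ tr : Fin H → S × A,
          if (∃ τ : Fin H, τ ≤ t ∧ ∀ i, (D1 i τ).1 ≠ (tr τ).1) then
            (trajProb ρ P (detPol πstar) tr - trajProb ρ P πhat tr) *
              r t (tr t).1 (tr t).2
          else 0)
        + ((∑ tr : Fin H → S × A, trajProb ρ P (detPol πstar) tr * g tr)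
            - (∑ tr : Fin H → S × A, trajProb ρ P πhat tr * g tr)) := by
    rw [← Finset.sum_sub_distrib, ← Finset.sum_add_distrib]
    apply Finset.sum_congr rfl
    intro tr _
    simp only [hgdef]
    split_ifs with hE
    · ring
    · ring
  rw [hsplit, hB, sub_self, add_zero]
  have hcollapse : (∑ tr : Fin H → S × A,
      if (∃ τ : Fin H, τ ≤ t ∧ ∀ i, (D1 i τ).1 ≠ (tr τ).1) then
        (trajProb ρ P (detPol πstar) tr - trajProb ρ P πhat tr) * r t (tr t).1 (tr t).2
      else 0)
      = ∑ s : S, ∑ a : A, r t s a *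
          ((∑ tr : Fin H → S × A,
            if (∃ τ : Fin H, τ ≤ t ∧ ∀ i, (D1 i τ).1 ≠ (tr τ).1) ∧
                (tr t).1 = s ∧ (tr t).2 = a then
              trajProb ρ P (detPol πstar) tr else 0) -
           (∑ tr : Fin H → S × A,
            if (∃ τ : Fin H, τ ≤ t ∧ ∀ i, (D1 i τ).1 ≠ (tr τ).1) ∧
                (tr t).1 = s ∧ (tr t).2 = a then
              trajProb ρ P πhat tr else 0)) := by
    symm
    calc ∑ s : S, ∑ a : A, r t s a *
          ((∑ tr : Fin H → S × A,
            if (∃ τ : Fin H, τ ≤ t ∧ ∀ i, (D1 i τ).1 ≠ (tr τ).1) ∧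
                (tr t).1 = s ∧ (tr t).2 = a then
              trajProb ρ P (detPol πstar) tr else 0) -
           (∑ tr : Fin H → S × A,
            if (∃ τ : Fin H, τ ≤ t ∧ ∀ i, (D1 i τ).1 ≠ (tr τ).1) ∧
                (tr t).1 = s ∧ (tr t).2 = a then
              trajProb ρ P πhat tr else 0))
        = ∑ s : S, ∑ a : A, ∑ tr : Fin H → S × A,
            (if (∃ τ : Fin H, τ ≤ t ∧ ∀ i, (D1 i τ).1 ≠ (tr τ).1) ∧
                (tr t).1 = s ∧ (tr t).2 = a then
              (trajProb ρ P (detPol πstar) tr - trajProb ρ P πhat tr) * r t s a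
            else 0) := by
          refine Finset.sum_congr rfl fun s _ => Finset.sum_congr rfl fun a _ => ?_
          rw [← Finset.sum_sub_distrib, Finset.mul_sum]
          refine Finset.sum_congr rfl fun tr _ => ?_
          split_ifs with h
          · ring
          · ring
      _ = ∑ tr : Fin H → S × A, ∑ s : S, ∑ a : A,
            (if (∃ τ : Fin H, τ ≤ t ∧ ∀ i, (D1 i τ).1 ≠ (tr τ).1) ∧
                (tr t).1 = s ∧ (tr t).2 = a then
              (trajProb ρ P (detPol πstar) tr - trajProb ρ P πhat tr) * r t s a
            else 0) := by
          exact (Finset.sum_congr rfl fun s _ => Finset.sum_comm).trans Finset.sum_comm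
      _ = ∑ tr : Fin H → S × A,
            (if (∃ τ : Fin H, τ ≤ t ∧ ∀ i, (D1 i τ).1 ≠ (tr τ).1) then
              (trajProb ρ P (detPol πstar) tr - trajProb ρ P πhat tr) *
                r t (tr t).1 (tr t).2
            else 0) := by
          refine Finset.sum_congr rfl fun tr _ => ?_
          by_cases hE : (∃ τ : Fin H, τ ≤ t ∧ ∀ i, (D1 i τ).1 ≠ (tr τ).1)
          · simp [hE, ite_and]
          · simp [hE]
  rw [hcollapse]
  apply Finset.sum_le_sum
  intro s _
  apply Finset.sum_le_sum
  intro a _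
  set d : ℝ := (∑ tr : Fin H → S × A,
            if (∃ τ : Fin H, τ ≤ t ∧ ∀ i, (D1 i τ).1 ≠ (tr τ).1) ∧
                (tr t).1 = s ∧ (tr t).2 = a then
              trajProb ρ P (detPol πstar) tr else 0) -
           (∑ tr : Fin H → S × A,
            if (∃ τ : Fin H, τ ≤ t ∧ ∀ i, (D1 i τ).1 ≠ (tr τ).1) ∧
                (tr t).1 = s ∧ (tr t).2 = a then
              trajProb ρ P πhat tr else 0) with hd
  calc r t s a * d ≤ r t s a * |d| :=
        mul_le_mul_of_nonneg_left (le_abs_self d) (hr0 t s a)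
    _ ≤ 1 * |d| := mul_le_mul_of_nonneg_right (hr1 t s a) (abs_nonneg d)
    _ = |d| := one_mul _

end MyAux


/-- Suboptimality of a policy mimicking a deterministic expert on the dataset `D₁`:
`J(π*) - J(π̂) ≤ ∑_t ∑_{s,a} |Pr_{π*}[E^{≤t}, s_t = s, a_t = a] -
Pr_{π̂}[E^{≤t}, s_t = s, a_t = a]|`, where `E^{≤t}` is the event that at some time
`τ ≤ t` the trajectory visits a state unvisited at time `τ` in every trajectory of `D₁`. -/
theorem stmt11 {S A : Type*} [Fintype S] [Fintype A] {H M : ℕ}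
    (ρ : S → ℝ) (hρ0 : ∀ s, 0 ≤ ρ s) (hρ1 : ∑ s, ρ s = 1)
    (P : Fin H → S → A → S → ℝ) (hP0 : ∀ t s a s', 0 ≤ P t s a s')
    (hP1 : ∀ t s a, ∑ s', P t s a s' = 1)
    (r : Fin H → S → A → ℝ) (hr0 : ∀ t s a, 0 ≤ r t s a) (hr1 : ∀ t s a, r t s a ≤ 1)
    (πstar : Fin H → S → A)
    (πhat : Fin H → S → A → ℝ)
    (hπh0 : ∀ t s a, 0 ≤ πhat t s a) (hπh1 : ∀ t s, ∑ a, πhat t s a = 1)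
    (D1 : Fin M → Fin H → S × A)
    (hmimic : ∀ t s, (∃ i, (D1 i t).1 = s) →
      ∀ a, πhat t s a = if a = πstar t s then 1 else 0) :
    value ρ P r (detPol πstar) - value ρ P r πhat ≤
      ∑ t : Fin H, ∑ s : S, ∑ a : A,
        |(∑ tr : Fin H → S × A,
            if (∃ τ : Fin H, τ ≤ t ∧ ∀ i, (D1 i τ).1 ≠ (tr τ).1) ∧
                (tr t).1 = s ∧ (tr t).2 = a then
              trajProb ρ P (detPol πstar) tr else 0) -
         (∑ tr : Fin H → S × A,
            if (∃ τ : Fin H, τ ≤ t ∧ ∀ i, (D1 i τ).1 ≠ (tr τ).1) ∧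
                (tr t).1 = s ∧ (tr t).2 = a then
              trajProb ρ P πhat tr else 0)| := by
  classical
  rcases Nat.eq_zero_or_pos H with hH | hH
  · subst hH
    simp [value]
  · have hS : Nonempty S := by
      by_contra h
      rw [not_nonempty_iff] at h
      rw [Finset.univ_eq_empty, Finset.sum_empty] at hρ1
      norm_num at hρ1
    obtain ⟨s₀⟩ := hS
    have hS' : Nonempty S := ⟨s₀⟩
    have hA : Nonempty A := by
      by_contra h
      rw [not_nonempty_iff] at h
      have h1 := hπh1 ⟨0, hH⟩ s₀
      rw [Finset.univ_eq_empty, Finset.sum_empty] at h1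
      norm_num at h1
    have hval : value ρ P r (detPol πstar) - value ρ P r πhat
        = ∑ t : Fin H, ∑ tr : Fin H → S × A,
            (trajProb ρ P (detPol πstar) tr - trajProb ρ P πhat tr) *
              r t (tr t).1 (tr t).2 := by
      rw [value, value, ← Finset.sum_sub_distrib]
      have hper : ∀ tr : Fin H → S × A,
          trajProb ρ P (detPol πstar) tr * (∑ τ : Fin H, r τ (tr τ).1 (tr τ).2)
            - trajProb ρ P πhat tr * (∑ τ : Fin H, r τ (tr τ).1 (tr τ).2)
          = ∑ τ : Fin H,
              (trajProb ρ P (detPol πstar) tr - trajProb ρ P πhat tr) *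
                r τ (tr τ).1 (tr τ).2 := by
        intro tr
        rw [← sub_mul, Finset.mul_sum]
      rw [Finset.sum_congr rfl (fun tr _ => hper tr), Finset.sum_comm]
    rw [hval]
    exact Finset.sum_le_sum
      (fun t _ => my_per_t ρ P hP1 r hr0 hr1 πstar πhat hπh1 D1 hmimic t)
end

section
/- For any ε ∈ (0,1] and H ≥ 1, ∑_{t=0}^{H-1} (H-t)·ε·(1-ε)^t ≥ (H/2)·(1 - (1-ε)^{⌊H/2⌋}), and hence the expected loss of a learner that fails independently with probability ε per step and loses all remaining reward is at least (1/4)·min{H, H²ε}. -/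
open Finset

private lemma sum_id_real (n : ℕ) : ∑ t ∈ Finset.range n, (t : ℝ) = n * (n - 1) / 2 := by
  induction n with
  | zero => simp
  | succ n ih => rw [Finset.sum_range_succ, ih]; push_cast; ring

private lemma sum_sq_real (n : ℕ) :
    ∑ t ∈ Finset.range n, (t : ℝ) ^ 2 = n * (n - 1) * (2 * n - 1) / 6 := by
  induction n with
  | zero => simp
  | succ n ih => rw [Finset.sum_range_succ, ih]; push_cast; ring

private lemma key_identity (x : ℝ) (n : ℕ) :
    ∑ t ∈ Finset.range n, ((n : ℝ) - t) * x ^ t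
      = ∑ k ∈ Finset.range n, ∑ t ∈ Finset.range (k + 1), x ^ t := by
  induction n with
  | zero => simp
  | succ n ih =>
    have h1 : ∑ t ∈ Finset.range (n + 1), (((n : ℝ) + 1) - t) * x ^ t
        = (∑ t ∈ Finset.range n, ((n : ℝ) - t) * x ^ t)
          + ∑ t ∈ Finset.range (n + 1), x ^ t := by
      rw [Finset.sum_range_succ]
      have h2 : ∑ t ∈ Finset.range n, (((n : ℝ) + 1) - t) * x ^ t
          = (∑ t ∈ Finset.range n, ((n : ℝ) - t) * x ^ t)
            + ∑ t ∈ Finset.range n, x ^ t := by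
        rw [← Finset.sum_add_distrib]
        exact Finset.sum_congr rfl fun t _ => by ring
      rw [h2, Finset.sum_range_succ]
      ring
    rw [Finset.sum_range_succ (fun k => ∑ t ∈ Finset.range (k + 1), x ^ t), ← ih]
    push_cast
    rw [h1]

/-- Error compounding lower bound: for `ε ∈ (0,1]` and `H ≥ 1`,
`∑_{t=0}^{H-1} (H-t) ε (1-ε)^t ≥ (H/2)(1 - (1-ε)^{⌊H/2⌋})`, and hence the expected
loss is at least `(1/4) min {H, H² ε}`. -/
theorem stmt15 (ε : ℝ) (hε0 : 0 < ε) (hε1 : ε ≤ 1) (H : ℕ) (hH : 1 ≤ H) :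
    ((H : ℝ) / 2) * (1 - (1 - ε) ^ (H / 2))
        ≤ ∑ t ∈ Finset.range H, ((H : ℝ) - t) * ε * (1 - ε) ^ t ∧
    (1 / 4) * min (H : ℝ) ((H : ℝ) ^ 2 * ε)
        ≤ ∑ t ∈ Finset.range H, ((H : ℝ) - t) * ε * (1 - ε) ^ t := by
  set q : ℝ := 1 - ε with hq
  have hq0 : 0 ≤ q := by simp [hq]; linarith
  have hq1 : q < 1 := by simp [hq]; linarith
  have hqne : q ≠ 1 := ne_of_lt hq1
  have hH1 : (1 : ℝ) ≤ (H : ℝ) := by exact_mod_cast hH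
  -- geometric sum formula
  have geom : ∀ n : ℕ, ∑ t ∈ Finset.range n, q ^ t = (1 - q ^ n) / ε := by
    intro n
    rw [geom_sum_eq hqne]
    rw [div_eq_div_iff (by simp [hq]; linarith) (ne_of_gt hε0)]
    ring
  -- nonnegativity of terms
  have hterm : ∀ t ∈ Finset.range H, 0 ≤ ((H : ℝ) - t) * ε * q ^ t := by
    intro t ht
    rw [Finset.mem_range] at ht
    have : (t : ℝ) ≤ (H : ℝ) := by exact_mod_cast ht.le
    exact mul_nonneg (mul_nonneg (by linarith) hε0.le) (pow_nonneg hq0 t)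
  -- Part 1
  have part1 : ((H : ℝ) / 2) * (1 - q ^ (H / 2))
      ≤ ∑ t ∈ Finset.range H, ((H : ℝ) - t) * ε * q ^ t := by
    have hsub : Finset.range (H / 2) ⊆ Finset.range H :=
      Finset.range_subset_range.2 (Nat.div_le_self H 2)
    have step1 : ∑ t ∈ Finset.range (H / 2), ((H : ℝ) - t) * ε * q ^ t
        ≤ ∑ t ∈ Finset.range H, ((H : ℝ) - t) * ε * q ^ t := by
      apply Finset.sum_le_sum_of_subset_of_nonneg hsub
      intro t ht _
      exact hterm t ht
    have step2 : ∑ t ∈ Finset.range (H / 2), ((H : ℝ) / 2) * (ε * q ^ t)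
        ≤ ∑ t ∈ Finset.range (H / 2), ((H : ℝ) - t) * ε * q ^ t := by
      apply Finset.sum_le_sum
      intro t ht
      rw [Finset.mem_range] at ht
      have h1 : (t : ℝ) < ((H / 2 : ℕ) : ℝ) := by exact_mod_cast ht
      have h2 : ((H / 2 : ℕ) : ℝ) ≤ (H : ℝ) / 2 := by
        rw [le_div_iff₀ (by norm_num : (0:ℝ) < 2)]
        exact_mod_cast Nat.div_mul_le_self H 2
      have h3 : (H : ℝ) / 2 ≤ (H : ℝ) - t := by linarith
      have h4 : 0 ≤ ε * q ^ t := by positivity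
      calc ((H : ℝ) / 2) * (ε * q ^ t) ≤ ((H : ℝ) - t) * (ε * q ^ t) :=
            mul_le_mul_of_nonneg_right h3 h4
        _ = ((H : ℝ) - t) * ε * q ^ t := by ring
    have step3 : ∑ t ∈ Finset.range (H / 2), ((H : ℝ) / 2) * (ε * q ^ t)
        = ((H : ℝ) / 2) * (1 - q ^ (H / 2)) := by
      rw [← Finset.mul_sum, ← Finset.mul_sum, geom]
      field_simp
    linarith [step3 ▸ step2, step1]
  refine ⟨part1, ?_⟩
  -- Part 2
  by_cases hcase : (H : ℝ) * ε ≤ 3 / 2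
  · -- small Hε: use Bernoulli q^t ≥ 1 - tε termwise
    have hbern : ∀ t : ℕ, 1 - (t : ℝ) * ε ≤ q ^ t := by
      intro t
      have := one_add_mul_le_pow (by linarith : (-2 : ℝ) ≤ -ε) t
      calc 1 - (t : ℝ) * ε = 1 + (t : ℝ) * (-ε) := by ring
        _ ≤ (1 + -ε) ^ t := this
        _ = q ^ t := by rw [hq]; ring_nf
    have hlow : ∑ t ∈ Finset.range H, ((H : ℝ) - t) * ε * (1 - (t : ℝ) * ε)
        ≤ ∑ t ∈ Finset.range H, ((H : ℝ) - t) * ε * q ^ t := by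
      apply Finset.sum_le_sum
      intro t ht
      rw [Finset.mem_range] at ht
      have h1 : (t : ℝ) ≤ (H : ℝ) := by exact_mod_cast ht.le
      have h2 : 0 ≤ ((H : ℝ) - t) * ε := by
        apply mul_nonneg (by linarith) hε0.le
      exact mul_le_mul_of_nonneg_left (hbern t) h2
    have hexp : ∑ t ∈ Finset.range H, ((H : ℝ) - t) * ε * (1 - (t : ℝ) * ε)
        = ε * H * H - (1 + ε * H) * ε * (H * (H - 1) / 2)
          + ε ^ 2 * (H * (H - 1) * (2 * H - 1) / 6) := by
      have : ∀ t ∈ Finset.range H, ((H : ℝ) - t) * ε * (1 - (t : ℝ) * ε)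
          = ε * H - (1 + ε * H) * ε * (t : ℝ) + ε ^ 2 * (t : ℝ) ^ 2 := by
        intro t _; ring
      rw [Finset.sum_congr rfl this]
      rw [Finset.sum_add_distrib, Finset.sum_sub_distrib]
      simp only [← Finset.mul_sum]
      rw [Finset.sum_const, Finset.card_range, sum_id_real, sum_sq_real, nsmul_eq_mul]
      push_cast
      ring
    have hmin : min (H : ℝ) ((H : ℝ) ^ 2 * ε) ≤ (H : ℝ) ^ 2 * ε := min_le_right _ _
    have hgoal : (1 / 4) * ((H : ℝ) ^ 2 * ε)
        ≤ ε * H * H - (1 + ε * H) * ε * (H * (H - 1) / 2)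
          + ε ^ 2 * (H * (H - 1) * (2 * H - 1) / 6) := by
      nlinarith [mul_nonneg hε0.le (sub_nonneg.2 hH1), hε0.le,
        mul_nonneg (mul_nonneg hε0.le hε0.le) (sub_nonneg.2 hH1),
        mul_nonneg (mul_nonneg hε0.le (sub_nonneg.2 hH1)) (sub_nonneg.2 hH1),
        mul_nonneg (mul_nonneg (mul_nonneg hε0.le hε0.le) (sub_nonneg.2 hH1)) (sub_nonneg.2 hH1)]
    have : (1 / 4) * min (H : ℝ) ((H : ℝ) ^ 2 * ε) ≤ (1 / 4) * ((H : ℝ) ^ 2 * ε) := by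
      linarith
    linarith [hlow, hexp ▸ hgoal]
  · -- large Hε: use the exact rewriting S = ∑ (1 - q^{k+1})
    push_neg at hcase
    have hrw : ∑ t ∈ Finset.range H, ((H : ℝ) - t) * ε * q ^ t
        = ∑ k ∈ Finset.range H, (1 - q ^ (k + 1)) := by
      calc ∑ t ∈ Finset.range H, ((H : ℝ) - t) * ε * q ^ t
          = ε * ∑ t ∈ Finset.range H, ((H : ℝ) - t) * q ^ t := by
            rw [Finset.mul_sum]
            exact Finset.sum_congr rfl fun t _ => by ring
        _ = ε * ∑ k ∈ Finset.range H, ∑ t ∈ Finset.range (k + 1), q ^ t := by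
            rw [key_identity]
        _ = ∑ k ∈ Finset.range H, ε * ((1 - q ^ (k + 1)) / ε) := by
            rw [Finset.mul_sum]
            exact Finset.sum_congr rfl fun k _ => by rw [geom]
        _ = ∑ k ∈ Finset.range H, (1 - q ^ (k + 1)) := by
            exact Finset.sum_congr rfl fun k _ => by field_simp
    have htail : ∑ k ∈ Finset.range H, q ^ (k + 1) ≤ 1 / ε := by
      have h1 : ∑ k ∈ Finset.range H, q ^ (k + 1) ≤ ∑ k ∈ Finset.range H, q ^ k := by
        apply Finset.sum_le_sum
        intro k _
        exact pow_le_pow_of_le_one hq0 hq1.le (Nat.le_succ k)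
      have h2 : ∑ k ∈ Finset.range H, q ^ k = (1 - q ^ H) / ε := geom H
      have h3 : (1 - q ^ H) / ε ≤ 1 / ε := by
        have := pow_nonneg hq0 H
        gcongr
        linarith
      linarith
    have hsum : ∑ k ∈ Finset.range H, (1 - q ^ (k + 1))
        = (H : ℝ) - ∑ k ∈ Finset.range H, q ^ (k + 1) := by
      rw [Finset.sum_sub_distrib, Finset.sum_const, Finset.card_range]
      simp
    have hinv : 1 / ε ≤ 2 * (H : ℝ) / 3 := by
      rw [div_le_div_iff₀ hε0 (by norm_num : (0:ℝ) < 3)]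
      nlinarith
    have hminH : min (H : ℝ) ((H : ℝ) ^ 2 * ε) ≤ (H : ℝ) := min_le_left _ _
    rw [hrw, hsum]
    linarith
end
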